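/- For every integer n ≥ 0 and real a > 0, the limit as real s → ∞ of (Q_n'(as)/Q_n(as) - ζ'(as)/ζ(as))^{-1/s} equals p_{n+1}^a. -/

import Mathlib

/-!
Removing the first `n` Euler factors from `ζ` leaves the Dirichlet series `Z_n(s) = ∑ m ^ (-s)`
over the `m` divisible by none of `p_1, …, p_n`, so `ζ = Q_n · Z_n` and
`Q_n'/Q_n - ζ'/ζ = -Z_n'/Z_n = (∑ log m · m ^ (-s)) / Z_n(s)`, both sums running over those `m`.
The least such `m > 1` is `p_{n+1}`; hence for `s ≥ 2` this quotient lies between two positive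
multiples of `p_{n+1} ^ (-s)`, and the `(-1/s)`-th power of `C · p_{n+1} ^ (-a s)` tends to
`p_{n+1} ^ a`.
-/

open Filter Real

noncomputable def zetaR (s : ℝ) : ℝ := ∑' m : ℕ, (m : ℝ) ^ (-s)

/-- `P k` is the (k+1)-st prime: `P 0 = 2`, `P 1 = 3`, ... -/
noncomputable def P (k : ℕ) : ℕ := Nat.nth Nat.Prime k

/-- Partial Euler product `Q n s = ∏_{k=1}^n (1 - p_k^{-s})⁻¹`. -/
noncomputable def Q (n : ℕ) (s : ℝ) : ℝ := ∏ k ∈ Finset.range n, (1 - (P k : ℝ) ^ (-s))⁻¹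

lemma tendsto_mul_rpow_neg_rpow_neg_one_div {q c : ℝ} (hq : 0 < q) (hc : 0 < c) :
    Tendsto (fun s : ℝ => (c * q ^ (-s)) ^ (-1 / s)) atTop (nhds q) := by
  have hc_root : Tendsto (fun s : ℝ => c ^ (-1 / s)) atTop (nhds 1) := by
    simpa using tendsto_const_nhds.rpow (tendsto_const_nhds.div_atTop tendsto_id) (Or.inl hc.ne')
  refine (by simpa using hc_root.mul_const q : Tendsto _ _ (nhds q)).congr' ?_
  filter_upwards [eventually_gt_atTop 0] with s hs
  have hexp : -s * (-1 / s) = 1 := by field_simp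
  rw [mul_rpow hc.le (by positivity), ← rpow_mul hq.le, hexp, rpow_one]

lemma tendsto_rpow_neg_one_div_of_le_of_le {f : ℝ → ℝ} {q c₁ c₂ : ℝ} (hq : 0 < q) (hc₁ : 0 < c₁)
    (hf : ∀ᶠ s in atTop, c₁ * q ^ (-s) ≤ f s ∧ f s ≤ c₂ * q ^ (-s)) :
    Tendsto (fun s => f s ^ (-1 / s)) atTop (nhds q) := by
  obtain ⟨s, hs₁, hs₂⟩ := hf.exists
  have hc₂ : 0 < c₂ := hc₁.trans_le (le_of_mul_le_mul_right (hs₁.trans hs₂) (by positivity))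
  refine tendsto_of_tendsto_of_tendsto_of_le_of_le' (tendsto_mul_rpow_neg_rpow_neg_one_div hq hc₂)
    (tendsto_mul_rpow_neg_rpow_neg_one_div hq hc₁) ?_ ?_
  all_goals filter_upwards [hf, eventually_gt_atTop 0] with s ⟨hlo, hhi⟩ hs
  all_goals have hexp : -1 / s ≤ 0 := div_nonpos_of_nonpos_of_nonneg (by norm_num) hs.le
  · exact rpow_le_rpow_of_nonpos ((mul_pos hc₁ (by positivity)).trans_le hlo) hhi hexp
  · exact rpow_le_rpow_of_nonpos (mul_pos hc₁ (by positivity)) hlo hexp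

lemma summable_log_mul_rpow_neg {σ : ℝ} (hσ : 1 < σ) :
    Summable fun m : ℕ => log m * (m : ℝ) ^ (-σ) := by
  set ε := (σ - 1) / 2 with hε_def
  have hε : 0 < ε := by positivity
  refine .of_nonneg_of_le (fun m => by positivity) (fun m => ?_)
    ((Real.summable_nat_rpow.2 (by linarith : ε - σ < -1)).div_const ε)
  have hm : (0 : ℝ) ≤ m := m.cast_nonneg
  calc log m * (m : ℝ) ^ (-σ) ≤ (m : ℝ) ^ ε / ε * (m : ℝ) ^ (-σ) := by
        gcongr; exact log_le_rpow_div hm hε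
    _ = (m : ℝ) ^ (ε - σ) / ε := by
        rw [sub_eq_add_neg, rpow_add' hm (by linarith : ε + -σ < 0).ne]; ring

lemma hasDerivAt_natCast_rpow_neg (m : ℕ) {t : ℝ} (ht : t ≠ 0) :
    HasDerivAt (fun t : ℝ => (m : ℝ) ^ (-t)) (-(log m * (m : ℝ) ^ (-t))) t := by
  rcases m.eq_zero_or_pos with rfl | hm
  · refine (hasDerivAt_const t 0).congr_of_eventuallyEq ?_ |>.congr_deriv (by simp)
    filter_upwards [eventually_ne_nhds ht] with u hu
    simp [zero_rpow (neg_ne_zero.2 hu)]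
  · exact ((hasStrictDerivAt_const_rpow (Nat.cast_pos.2 hm) (-t)).hasDerivAt.comp t
      (hasDerivAt_neg t)).congr_deriv (by ring)

lemma abs_indicator_one_le {α : Type*} (S : Set α) (a : α) : |S.indicator (1 : α → ℝ) a| ≤ 1 := by
  by_cases h : a ∈ S <;> simp [h]

noncomputable def dirichletSeries (c : ℕ → ℝ) (s : ℝ) : ℝ := ∑' m : ℕ, c m * (m : ℝ) ^ (-s)

noncomputable abbrev logMul (c : ℕ → ℝ) (m : ℕ) : ℝ := c m * log m

section DirichletSeries

variable {c : ℕ → ℝ} {C s : ℝ}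

lemma summable_dirichletSeries (hc : ∀ m, |c m| ≤ C) (hs : 1 < s) :
    Summable fun m : ℕ => c m * (m : ℝ) ^ (-s) :=
  .of_norm_bounded ((Real.summable_nat_rpow.2 (by linarith : -s < -1)).mul_left C) fun m => by
    rw [norm_mul, Real.norm_eq_abs, Real.norm_eq_abs, abs_of_nonneg (rpow_nonneg m.cast_nonneg _)]
    exact mul_le_mul_of_nonneg_right (hc m) (by positivity)

lemma summable_dirichletSeries_logMul (hc : ∀ m, |c m| ≤ C) (hs : 1 < s) :
    Summable fun m : ℕ => logMul c m * (m : ℝ) ^ (-s) :=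
  .of_norm_bounded ((summable_log_mul_rpow_neg hs).mul_left C) fun m => by
    have hlog : 0 ≤ log m * (m : ℝ) ^ (-s) := mul_nonneg (log_natCast_nonneg m) (by positivity)
    rw [mul_assoc, norm_mul, Real.norm_eq_abs, Real.norm_eq_abs, abs_of_nonneg hlog]
    exact mul_le_mul_of_nonneg_right (hc m) hlog

lemma hasDerivAt_dirichletSeries (hc : ∀ m, |c m| ≤ C) (hs : 1 < s) :
    HasDerivAt (dirichletSeries c) (-dirichletSeries (logMul c) s) s := by
  set σ := (1 + s) / 2 with hσ_def
  have hσ : 1 < σ := by linarith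
  have hσs : σ < s := by linarith
  -- the derivatives of the terms are dominated by `C log m m ^ (-σ)` on `(σ, ∞)`
  have key := hasDerivAt_tsum_of_isPreconnected (y₀ := s) (t := Set.Ioi σ)
    (g := fun m t => c m * (m : ℝ) ^ (-t)) (g' := fun m t => c m * -(log m * (m : ℝ) ^ (-t)))
    ((summable_log_mul_rpow_neg hσ).mul_left C) isOpen_Ioi isPreconnected_Ioi
    (fun m t ht => (hasDerivAt_natCast_rpow_neg m (by linarith [ht.out])).const_mul (c m))
    (fun m t ht => ?_) hσs (summable_dirichletSeries hc hs) hσs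
  · refine key.congr_deriv ?_
    rw [dirichletSeries, ← tsum_neg]
    exact tsum_congr fun m => by ring
  · have hm : (0 : ℝ) ≤ m := m.cast_nonneg
    rw [norm_mul, norm_neg, norm_mul, Real.norm_eq_abs, Real.norm_eq_abs, Real.norm_eq_abs,
      abs_of_nonneg (log_natCast_nonneg m), abs_of_nonneg (rpow_nonneg hm _)]
    have hσt : (m : ℝ) ^ (-t) ≤ (m : ℝ) ^ (-σ) := by
      rcases hm.eq_or_lt with h | h
      · rw [← h, zero_rpow (by linarith [ht.out]), zero_rpow (by linarith)]
      · exact rpow_le_rpow_of_exponent_le (by exact_mod_cast h) (by linarith [ht.out])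
    exact mul_le_mul (hc m) (mul_le_mul_of_nonneg_left hσt (log_natCast_nonneg m))
      (by positivity) ((abs_nonneg _).trans (hc 0))

lemma dirichletSeries_le_rpow_mul {q σ : ℝ} (hc : ∀ m, 0 ≤ c m) (hq : 0 < q)
    (hsupp : ∀ m, c m ≠ 0 → q ≤ m) (hsum : Summable fun m : ℕ => c m * (m : ℝ) ^ (-σ))
    (hσs : σ ≤ s) : dirichletSeries c s ≤ q ^ (σ - s) * dirichletSeries c σ := by
  have hterm (m : ℕ) : c m * (m : ℝ) ^ (-s) ≤ q ^ (σ - s) * (c m * (m : ℝ) ^ (-σ)) := by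
    by_cases hcm : c m = 0
    · simp [hcm]
    have hqm := hsupp m hcm
    have hm : (0 : ℝ) < m := hq.trans_le hqm
    calc c m * (m : ℝ) ^ (-s) = (m : ℝ) ^ (σ - s) * (c m * (m : ℝ) ^ (-σ)) := by
          rw [mul_left_comm, ← rpow_add hm]; ring_nf
      _ ≤ q ^ (σ - s) * (c m * (m : ℝ) ^ (-σ)) :=
          mul_le_mul_of_nonneg_right (rpow_le_rpow_of_nonpos hq hqm (by linarith))
            (mul_nonneg (hc m) (by positivity))
  rw [dirichletSeries, dirichletSeries, ← tsum_mul_left]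
  exact Summable.tsum_le_tsum hterm
    (.of_nonneg_of_le (fun m => mul_nonneg (hc m) (by positivity)) hterm (hsum.mul_left _))
    (hsum.mul_left _)

end DirichletSeries

lemma P_prime (k : ℕ) : (P k).Prime := Nat.prime_nth_prime k

lemma P_strictMono : StrictMono P := Nat.nth_strictMono Nat.infinite_setOfPred_prime

lemma P_dvd_P_iff {j k : ℕ} : P j ∣ P k ↔ j = k :=
  (Nat.prime_dvd_prime_iff_eq (P_prime j) (P_prime k)).trans P_strictMono.injective.eq_iff

lemma one_sub_P_rpow_neg_pos (k : ℕ) {s : ℝ} (hs : 0 < s) : 0 < 1 - (P k : ℝ) ^ (-s) :=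
  sub_pos.2 (rpow_lt_one_of_one_lt_of_neg (by exact_mod_cast (P_prime k).one_lt) (neg_lt_zero.2 hs))

lemma Q_pos (n : ℕ) {s : ℝ} (hs : 0 < s) : 0 < Q n s :=
  Finset.prod_pos fun k _ => inv_pos.2 (one_sub_P_rpow_neg_pos k hs)

lemma differentiableAt_Q (n : ℕ) {s : ℝ} (hs : 0 < s) : DifferentiableAt ℝ (Q n) s := by
  unfold Q
  fun_prop (disch := first
    | exact (one_sub_P_rpow_neg_pos _ hs).ne'
    | exact_mod_cast (P_prime _).ne_zero)

def roughNumbers (n : ℕ) : Set ℕ := {m | m ≠ 0 ∧ ∀ k < n, ¬ P k ∣ m}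

lemma roughNumbers_zero : roughNumbers 0 = {0}ᶜ := by
  ext m; simp [roughNumbers]

lemma roughNumbers_succ (n : ℕ) : roughNumbers (n + 1) = roughNumbers n \ {m | P n ∣ m} := by
  ext m
  simp only [roughNumbers, Nat.lt_succ_iff_lt_or_eq, or_imp, forall_and, forall_eq,
    Set.mem_sdiff, Set.mem_ofPred_eq]
  tauto

lemma P_mul_mem_roughNumbers_iff {n m : ℕ} : P n * m ∈ roughNumbers n ↔ m ∈ roughNumbers n := by
  have hP : P n ≠ 0 := (P_prime n).ne_zero
  have hdvd {k : ℕ} (hk : k < n) : P k ∣ P n * m ↔ P k ∣ m := by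
    rw [(P_prime k).prime.dvd_mul, P_dvd_P_iff, or_iff_right hk.ne]
  simp +contextual [roughNumbers, hP, hdvd]

lemma one_mem_roughNumbers (n : ℕ) : 1 ∈ roughNumbers n :=
  ⟨one_ne_zero, fun k _ h => (P_prime k).one_lt.ne' (Nat.dvd_one.1 h)⟩

lemma P_mem_roughNumbers (n : ℕ) : P n ∈ roughNumbers n := by
  simpa using P_mul_mem_roughNumbers_iff.2 (one_mem_roughNumbers n)

lemma P_le_of_mem_roughNumbers {n m : ℕ} (hm : m ∈ roughNumbers n) (h1 : m ≠ 1) : P n ≤ m := by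
  have hP : P (Nat.count Nat.Prime m.minFac) = m.minFac := Nat.nth_count (Nat.minFac_prime h1)
  have hn : n ≤ Nat.count Nat.Prime m.minFac := by
    by_contra! hlt
    exact hm.2 _ hlt (hP.symm ▸ m.minFac_dvd)
  calc P n ≤ m.minFac := hP ▸ P_strictMono.monotone hn
    _ ≤ m := Nat.minFac_le (Nat.pos_of_ne_zero hm.1)

noncomputable def roughZeta (n : ℕ) : ℝ → ℝ := dirichletSeries ((roughNumbers n).indicator 1)

lemma zetaR_eq_roughZeta_zero {s : ℝ} (hs : s ≠ 0) : zetaR s = roughZeta 0 s := by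
  refine tsum_congr fun m => ?_
  rcases eq_or_ne m 0 with rfl | hm
  · simp [zero_rpow (neg_ne_zero.2 hs)]
  · simp [roughNumbers_zero, hm]

lemma roughZeta_succ (n : ℕ) {s : ℝ} (hs : 1 < s) :
    roughZeta (n + 1) s = (1 - (P n : ℝ) ^ (-s)) * roughZeta n s := by
  let term (k : ℕ) (m : ℕ) : ℝ := (roughNumbers k).indicator 1 m * (m : ℝ) ^ (-s)
  have hsum (k : ℕ) : Summable (term k) := summable_dirichletSeries (abs_indicator_one_le _) hs
  -- the terms dropped in passing from `n` to `n + 1` are those at the multiples `P n * m`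
  have hsupp : Function.support (fun m => term n m - term (n + 1) m) ⊆ Set.range (P n * ·) := by
    intro m hm
    by_contra hPm
    refine hm ?_
    have hndvd : ¬ P n ∣ m := fun ⟨k, hk⟩ => hPm ⟨k, hk.symm⟩
    have hmem : m ∈ roughNumbers n ↔ m ∈ roughNumbers (n + 1) := by
      simp [roughNumbers_succ, hndvd]
    simp only [term, Set.indicator_eq_indicator hmem rfl, sub_self]
  have hmul (m : ℕ) :
      term n (P n * m) - term (n + 1) (P n * m) = (P n : ℝ) ^ (-s) * term n m := by
    have hdvd : P n * m ∉ roughNumbers (n + 1) := by simp [roughNumbers_succ]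
    have hind : (roughNumbers n).indicator (1 : ℕ → ℝ) (P n * m) =
        (roughNumbers n).indicator 1 m :=
      Set.indicator_eq_indicator P_mul_mem_roughNumbers_iff rfl
    simp only [term, Set.indicator_of_notMem hdvd, hind, Nat.cast_mul,
      mul_rpow (Nat.cast_nonneg _) (Nat.cast_nonneg _)]
    ring
  have hdiff : roughZeta n s - roughZeta (n + 1) s = (P n : ℝ) ^ (-s) * roughZeta n s :=
    calc roughZeta n s - roughZeta (n + 1) s = ∑' m, (term n m - term (n + 1) m) :=
          ((hsum n).tsum_sub (hsum (n + 1))).symm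
      _ = ∑' m, (term n (P n * m) - term (n + 1) (P n * m)) :=
          ((mul_right_injective₀ (P_prime n).ne_zero).tsum_eq hsupp).symm
      _ = (P n : ℝ) ^ (-s) * roughZeta n s := by simp only [hmul, tsum_mul_left]; rfl
  linarith

lemma zetaR_eq_Q_mul_roughZeta (n : ℕ) {s : ℝ} (hs : 1 < s) :
    zetaR s = Q n s * roughZeta n s := by
  induction n with
  | zero => simp [Q, zetaR_eq_roughZeta_zero (by linarith : s ≠ 0)]
  | succ n ih =>
    have hne := (one_sub_P_rpow_neg_pos n (by linarith : 0 < s)).ne'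
    rw [ih, Q, Q, Finset.prod_range_succ, roughZeta_succ n hs]
    field_simp

lemma one_le_roughZeta (n : ℕ) {s : ℝ} (hs : 1 < s) : 1 ≤ roughZeta n s := by
  simpa [roughZeta, dirichletSeries, Set.indicator_of_mem (one_mem_roughNumbers n)] using
    (summable_dirichletSeries (abs_indicator_one_le (roughNumbers n)) hs).le_tsum 1
      fun m _ => mul_nonneg (Set.indicator_nonneg (fun _ _ => zero_le_one) m) (by positivity)

lemma roughZeta_le_of_le (n : ℕ) {σ s : ℝ} (hσ : 1 < σ) (hσs : σ ≤ s) :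
    roughZeta n s ≤ roughZeta n σ := by
  have h := dirichletSeries_le_rpow_mul (Set.indicator_nonneg fun _ _ => zero_le_one) one_pos
    (fun m hm => Nat.one_le_cast.2 (Nat.pos_of_ne_zero (Set.mem_of_indicator_ne_zero hm).1))
    (summable_dirichletSeries (abs_indicator_one_le (roughNumbers n)) hσ) hσs
  rwa [one_rpow, one_mul] at h

lemma log_mul_rpow_le_dirichletSeries_logMul (n : ℕ) {s : ℝ} (hs : 1 < s) :
    log (P n) * (P n : ℝ) ^ (-s) ≤ dirichletSeries (logMul ((roughNumbers n).indicator 1)) s := by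
  simpa [dirichletSeries, logMul, Set.indicator_of_mem (P_mem_roughNumbers n)] using
    (summable_dirichletSeries_logMul (abs_indicator_one_le (roughNumbers n)) hs).le_tsum (P n)
      fun m _ => mul_nonneg (mul_nonneg (Set.indicator_nonneg (fun _ _ => zero_le_one) m)
        (log_natCast_nonneg m)) (by positivity)

lemma dirichletSeries_logMul_le (n : ℕ) {σ s : ℝ} (hσ : 1 < σ) (hσs : σ ≤ s) :
    dirichletSeries (logMul ((roughNumbers n).indicator 1)) s ≤
      (P n : ℝ) ^ (σ - s) * dirichletSeries (logMul ((roughNumbers n).indicator 1)) σ := by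
  refine dirichletSeries_le_rpow_mul
    (fun m => mul_nonneg (Set.indicator_nonneg (fun _ _ => zero_le_one) m) (log_natCast_nonneg m))
    (by exact_mod_cast (P_prime n).pos) (fun m hm => ?_)
    (summable_dirichletSeries_logMul (abs_indicator_one_le (roughNumbers n)) hσ) hσs
  have hm1 : m ≠ 1 := by rintro rfl; simp at hm
  have hmem := Set.mem_of_indicator_ne_zero (left_ne_zero_of_mul hm)
  exact_mod_cast P_le_of_mem_roughNumbers hmem hm1

lemma logDeriv_Q_sub_logDeriv_zetaR (n : ℕ) {s : ℝ} (hs : 1 < s) :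
    logDeriv (Q n) s - logDeriv zetaR s =
      dirichletSeries (logMul ((roughNumbers n).indicator 1)) s / roughZeta n s := by
  have hZ : HasDerivAt (roughZeta n)
      (-dirichletSeries (logMul ((roughNumbers n).indicator 1)) s) s :=
    hasDerivAt_dirichletSeries (abs_indicator_one_le (roughNumbers n)) hs
  have hζ : zetaR =ᶠ[nhds s] fun t => Q n t * roughZeta n t := by
    filter_upwards [eventually_gt_nhds hs] with t ht using zetaR_eq_Q_mul_roughZeta n ht
  rw [(logDeriv_congr_nhds hζ).eq_of_nhds, logDeriv_mul s (Q_pos n (by linarith)).ne'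
    (by linarith [one_le_roughZeta n hs]) (differentiableAt_Q n (by linarith)) hZ.differentiableAt,
    logDeriv_apply (roughZeta n), hZ.deriv, roughZeta]
  ring

lemma exists_bounds_logDeriv_Q_sub_logDeriv_zetaR (n : ℕ) : ∃ c₁ c₂ : ℝ, 0 < c₁ ∧
    ∀ s ≥ 2, c₁ * (P n : ℝ) ^ (-s) ≤ logDeriv (Q n) s - logDeriv zetaR s ∧
      logDeriv (Q n) s - logDeriv zetaR s ≤ c₂ * (P n : ℝ) ^ (-s) := by
  set L := dirichletSeries (logMul ((roughNumbers n).indicator 1))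
  have hP : (1 : ℝ) < P n := by exact_mod_cast (P_prime n).one_lt
  have hZ2 : 0 < roughZeta n 2 := by linarith [one_le_roughZeta n one_lt_two]
  refine ⟨log (P n) / roughZeta n 2, (P n : ℝ) ^ (2 : ℝ) * L 2, div_pos (log_pos hP) hZ2,
    fun s hs => ?_⟩
  have hs1 : 1 < s := by linarith
  have hL0 : 0 ≤ L s := (rpow_pos_of_pos (by linarith) _ |> mul_pos (log_pos hP)).le.trans
    (log_mul_rpow_le_dirichletSeries_logMul n hs1)
  rw [logDeriv_Q_sub_logDeriv_zetaR n hs1]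
  constructor
  · calc log (P n) / roughZeta n 2 * (P n : ℝ) ^ (-s)
        = log (P n) * (P n : ℝ) ^ (-s) / roughZeta n 2 := by ring
      _ ≤ L s / roughZeta n s :=
        div_le_div₀ hL0 (log_mul_rpow_le_dirichletSeries_logMul n hs1)
          (by linarith [one_le_roughZeta n hs1]) (roughZeta_le_of_le n one_lt_two hs)
  · calc L s / roughZeta n s ≤ L s := div_le_self hL0 (one_le_roughZeta n hs1)
      _ ≤ (P n : ℝ) ^ ((2 : ℝ) - s) * L 2 := dirichletSeries_logMul_le n one_lt_two hs
      _ = (P n : ℝ) ^ (2 : ℝ) * L 2 * (P n : ℝ) ^ (-s) := by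
          rw [sub_eq_add_neg, rpow_add (by linarith)]; ring

theorem log_deriv_difference_limit (n : ℕ) (a : ℝ) (ha : 0 < a) :
    Tendsto (fun s : ℝ =>
        (deriv (Q n) (a * s) / Q n (a * s) - deriv zetaR (a * s) / zetaR (a * s)) ^ (-1 / s))
      atTop (nhds ((P n : ℝ) ^ a)) := by
  obtain ⟨c₁, c₂, hc₁, hbounds⟩ := exists_bounds_logDeriv_Q_sub_logDeriv_zetaR n
  have hP : (0 : ℝ) < P n := by exact_mod_cast (P_prime n).pos
  refine tendsto_rpow_neg_one_div_of_le_of_le (c₂ := c₂) (rpow_pos_of_pos hP a) hc₁ ?_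
  filter_upwards [(tendsto_id.const_mul_atTop ha).eventually_ge_atTop 2] with s hs
  rw [← rpow_mul hP.le, mul_neg]
  exact hbounds (a * s) hs
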